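/- arXiv:2110.00362 — 3 statements merged into one kernel-verified Lean document; each statement's English description precedes it below -/
import Mathlib

section
/- With U(C) = −(C/R)^a (C − βx) − x on (0, R], if R > aβx/(1+a) then U attains its unique maximum on (0, R] at C = aβx/(1+a); if R ≤ aβx/(1+a) then U is strictly increasing on (0, R] and maximized at C = R. -/
/-!
Since `(C / R) ^ a = C ^ a / R ^ a`, the utility is `C ^ a * (β x - C) / R ^ a - x`, an increasing affine
image of `g C = C ^ a * (b - C)` with `b = β x`. On `C > 0` we have
`g' C = C ^ (a - 1) * (a b - (1 + a) C)`, which is positive below `a b / (1 + a)` and negative above it,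
so `g` rises strictly up to that point and falls strictly after it.
-/

namespace RpowMulSub

variable {a : ℝ}

theorem hasDerivAt (b : ℝ) {C : ℝ} (hC : 0 < C) :
    HasDerivAt (fun C : ℝ => C ^ a * (b - C)) (C ^ (a - 1) * (a * b - (1 + a) * C)) C := by
  have hpow : C ^ a = C ^ (a - 1) * C := by
    rw [← Real.rpow_add_one hC.ne', sub_add_cancel]
  exact ((Real.hasDerivAt_rpow_const (Or.inl hC.ne')).mul
    ((hasDerivAt_id C).const_sub b)).congr_deriv (by rw [hpow, id]; ring)

theorem continuousOn (b : ℝ) {s : Set ℝ} (hs : s ⊆ Set.Ioi 0) :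
    ContinuousOn (fun C : ℝ => C ^ a * (b - C)) s := fun _ hC =>
  (hasDerivAt b (hs hC)).continuousAt.continuousWithinAt

theorem strictMonoOn (ha : 0 < a) (b : ℝ) :
    StrictMonoOn (fun C : ℝ => C ^ a * (b - C)) (Set.Ioc 0 (a * b / (1 + a))) := by
  refine strictMonoOn_of_deriv_pos (convex_Ioc _ _) (continuousOn b Set.Ioc_subset_Ioi_self) ?_
  intro C hC
  rw [interior_Ioc] at hC
  have hlt : (1 + a) * C < a * b := (lt_div_iff₀' (by linarith)).mp hC.2
  rw [(hasDerivAt b hC.1).deriv]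
  exact mul_pos (Real.rpow_pos_of_pos hC.1 _) (by linarith)

theorem strictAntiOn (ha : 0 < a) {b : ℝ} (hb : 0 < b) :
    StrictAntiOn (fun C : ℝ => C ^ a * (b - C)) (Set.Ici (a * b / (1 + a))) := by
  have hpeak : 0 < a * b / (1 + a) := by positivity
  refine strictAntiOn_of_deriv_neg (convex_Ici _)
    (continuousOn b fun C hC => hpeak.trans_le hC) ?_
  intro C hC
  rw [interior_Ici] at hC
  have hC0 : 0 < C := hpeak.trans hC
  have hgt : a * b < (1 + a) * C := (div_lt_iff₀' (by linarith)).mp hC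
  rw [(hasDerivAt b hC0).deriv]
  exact mul_neg_of_pos_of_neg (Real.rpow_pos_of_pos hC0 _) (by linarith)

theorem lt_of_ne_peak (ha : 0 < a) {b C : ℝ} (hb : 0 < b) (hC : 0 < C)
    (hne : C ≠ a * b / (1 + a)) :
    C ^ a * (b - C) < (a * b / (1 + a)) ^ a * (b - a * b / (1 + a)) := by
  have hpeak : 0 < a * b / (1 + a) := by positivity
  rcases hne.lt_or_gt with hlt | hgt
  · exact strictMonoOn ha b ⟨hC, hlt.le⟩ ⟨hpeak, le_rfl⟩ hlt
  · exact strictAntiOn ha hb Set.self_mem_Ici hgt.le hgt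

end RpowMulSub

theorem neg_div_rpow_mul_sub_sub_eq {a R b x C : ℝ} (hR : 0 < R) (hC : 0 ≤ C) :
    -((C / R) ^ a) * (C - b) - x = C ^ a * (b - C) / R ^ a - x := by
  rw [Real.div_rpow hC hR.le]
  ring

theorem defender_optimal_counteroffer (a β x R : ℝ) (ha : 0 < a)
    (hβ : β ∈ Set.Ioc (0 : ℝ) 1) (hx : 0 < x) (hR : 0 < R) :
    (a * β * x / (1 + a) < R →
      ∀ C ∈ Set.Ioc (0 : ℝ) R, C ≠ a * β * x / (1 + a) →
        -((C / R) ^ a) * (C - β * x) - x <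
          -((a * β * x / (1 + a) / R) ^ a) * (a * β * x / (1 + a) - β * x) - x) ∧
    (R ≤ a * β * x / (1 + a) →
      StrictMonoOn (fun C : ℝ => -((C / R) ^ a) * (C - β * x) - x)
        (Set.Ioc 0 R)) := by
  have hb : 0 < β * x := mul_pos hβ.1 hx
  have hpeak : a * β * x / (1 + a) = a * (β * x) / (1 + a) := by rw [mul_assoc]
  have hscale : StrictMono fun y : ℝ => y / R ^ a - x := fun _ _ h => by
    simpa using div_lt_div_of_pos_right h (Real.rpow_pos_of_pos hR a)
  rw [hpeak]
  refine ⟨fun _ C hC hne => ?_, fun hRpeak => ?_⟩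
  · rw [neg_div_rpow_mul_sub_sub_eq hR hC.1.le,
      neg_div_rpow_mul_sub_sub_eq hR (by positivity)]
    exact hscale (RpowMulSub.lt_of_ne_peak ha hb hC.1 hne)
  · refine (hscale.comp_strictMonoOn
      ((RpowMulSub.strictMonoOn ha (β * x)).mono (Set.Ioc_subset_Ioc_right hRpeak))).congr ?_
    intro C hC
    exact (neg_div_rpow_mul_sub_sub_eq hR hC.1.le).symm
end

section
/- The gross profit function GP(x̃) = (aβ/(1+a))·x̃ for x̃ ≤ x and (aβ/(1+a))·x(x/x̃)^a for x̃ > x is continuous on (0,∞), attains its maximum value aβx/(1+a) uniquely at x̃ = x, is strictly increasing on (0, x] and strictly decreasing on [x, ∞), and tends to 0 as x̃ → ∞. -/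
/-! The profit is linear below the true value `x` and decays like `x̃ ^ (-a)` above it; the two
pieces agree at `x̃ = x`, so the function rises strictly to its value at `x` and then falls
strictly to `0`. The maximum and its uniqueness are read off from the two monotonicity
statements. -/

open Filter Set Topology

/-- With `c = aβ/(1+a)`, `grossProfit c a x x̃` is the gross profit `GP(x̃)`. -/
noncomputable def grossProfit (c a x u : ℝ) : ℝ :=
  if u ≤ x then c * u else c * x * (x / u) ^ a

namespace grossProfit

variable {c a x : ℝ}

theorem apply_self : grossProfit c a x x = c * x :=
  if_pos le_rfl

theorem eq_of_le {u : ℝ} (h : x ≤ u) : grossProfit c a x u = c * x * (x / u) ^ a := by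
  rcases h.eq_or_lt with rfl | hlt
  · rw [apply_self]
    rcases eq_or_ne x 0 with rfl | hx
    · simp
    · rw [div_self hx, Real.one_rpow, mul_one]
  · exact if_neg hlt.not_ge

theorem continuousOn (ha : 0 ≤ a) : ContinuousOn (grossProfit c a x) (Ioi 0) := by
  refine ContinuousOn.if ?_ (continuous_const.mul continuous_id).continuousOn ?_
  · rintro u ⟨-, hu⟩
    rw [show {u : ℝ | u ≤ x} = Iic x from rfl, frontier_Iic, mem_singleton_iff] at hu
    subst hu
    rw [← eq_of_le le_rfl, apply_self]
  · refine (continuousOn_const.mul ((continuousOn_const.div continuousOn_id ?_).rpow_const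
      fun _ _ => Or.inr ha)).mono inter_subset_left
    exact fun u hu => (mem_Ioi.mp hu).ne'

theorem strictMonoOn (hc : 0 < c) : StrictMonoOn (grossProfit c a x) (Iic x) := by
  intro u hu v hv huv
  simp only [grossProfit, if_pos (mem_Iic.mp hu), if_pos (mem_Iic.mp hv)]
  exact mul_lt_mul_of_pos_left huv hc

theorem strictAntiOn (hc : 0 < c) (ha : 0 < a) (hx : 0 < x) :
    StrictAntiOn (grossProfit c a x) (Ici x) := by
  intro u hu v hv huv
  have hu0 : 0 < u := hx.trans_le hu
  rw [eq_of_le hu, eq_of_le hv]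
  have hdiv : x / v < x / u := div_lt_div_of_pos_left hx hu0 huv
  have hpow : (x / v) ^ a < (x / u) ^ a :=
    Real.rpow_lt_rpow (div_pos hx (hu0.trans huv)).le hdiv ha
  exact mul_lt_mul_of_pos_left hpow (mul_pos hc hx)

theorem lt_apply_self (hc : 0 < c) (ha : 0 < a) (hx : 0 < x) {u : ℝ} (hu : u ≠ x) :
    grossProfit c a x u < c * x := by
  rw [← apply_self (a := a)]
  rcases hu.lt_or_gt with hlt | hgt
  · exact strictMonoOn hc hlt.le self_mem_Iic hlt
  · exact strictAntiOn hc ha hx self_mem_Ici hgt.le hgt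

theorem tendsto_atTop (ha : 0 < a) : Tendsto (grossProfit c a x) atTop (𝓝 0) := by
  have hquot : Tendsto (fun u : ℝ => x / u) atTop (𝓝 0) :=
    tendsto_const_nhds.div_atTop tendsto_id
  have hpow : Tendsto (fun u : ℝ => (x / u) ^ a) atTop (𝓝 0) := by
    have hcont := (Real.continuousAt_rpow_const 0 a (Or.inr ha.le)).tendsto
    rw [Real.zero_rpow ha.ne'] at hcont
    exact hcont.comp hquot
  have htail : (fun u => c * x * (x / u) ^ a) =ᶠ[atTop] grossProfit c a x :=
    (eventually_ge_atTop x).mono fun _ hu => (eq_of_le hu).symm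
  simpa using (hpow.const_mul (c * x)).congr' htail

end grossProfit

theorem gross_profit_shape (a β x : ℝ) (ha : 0 < a)
    (hβ : β ∈ Set.Ioc (0 : ℝ) 1) (hx : 0 < x) :
    ContinuousOn
      (fun x' : ℝ => if x' ≤ x then a * β / (1 + a) * x'
        else a * β / (1 + a) * x * (x / x') ^ a) (Set.Ioi 0) ∧
    (if x ≤ x then a * β / (1 + a) * x else a * β / (1 + a) * x * (x / x) ^ a)
      = a * β * x / (1 + a) ∧
    (∀ x' : ℝ, 0 < x' → x' ≠ x →
      (if x' ≤ x then a * β / (1 + a) * x'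
        else a * β / (1 + a) * x * (x / x') ^ a) < a * β * x / (1 + a)) ∧
    StrictMonoOn
      (fun x' : ℝ => if x' ≤ x then a * β / (1 + a) * x'
        else a * β / (1 + a) * x * (x / x') ^ a) (Set.Ioc 0 x) ∧
    StrictAntiOn
      (fun x' : ℝ => if x' ≤ x then a * β / (1 + a) * x'
        else a * β / (1 + a) * x * (x / x') ^ a) (Set.Ici x) ∧
    Tendsto
      (fun x' : ℝ => if x' ≤ x then a * β / (1 + a) * x'
        else a * β / (1 + a) * x * (x / x') ^ a) atTop (nhds 0) := by
  have hc : 0 < a * β / (1 + a) := div_pos (mul_pos ha hβ.1) (by linarith)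
  have hmax : a * β / (1 + a) * x = a * β * x / (1 + a) := by ring
  refine ⟨grossProfit.continuousOn ha.le, grossProfit.apply_self.trans hmax,
    fun u _ hu => hmax ▸ grossProfit.lt_apply_self hc ha hx hu,
    (grossProfit.strictMonoOn hc).mono Ioc_subset_Iic_self,
    grossProfit.strictAntiOn hc ha hx, grossProfit.tendsto_atTop ha⟩
end

section
/- For σ > 0 and a > 0, the double integral ∫₀^∞ ∫₀^∞ GP(x̃, x; a, β) f(x̃, ln x, σ) g(x) dx̃ dx equals (aβ/(a+1)) · M · [∫₀^1 (1/(σ√(2π))) e^{−(ln y)²/(2σ²)} dy + ∫₁^∞ y^{−a−1} (1/(σ√(2π))) e^{−(ln y)²/(2σ²)} dy], where M = ∫₀^∞ x g(x) dx, via the substitution x̃ = x y. -/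
open MeasureTheory Real

/-- Player A's gross profit. -/
noncomputable def GP (xt x a β : ℝ) : ℝ :=
  if xt ≤ x then a * β / (a + 1) * xt
  else a * β / (a + 1) * x * (x / xt) ^ a

/-- Lognormal(μ, σ²) density. -/
noncomputable def lognormalPdf (xt μ σ : ℝ) : ℝ :=
  (1 / (xt * σ * Real.sqrt (2 * Real.pi))) *
    Real.exp (-(Real.log xt - μ) ^ 2 / (2 * σ ^ 2))

theorem expected_gross_profit_reduction (a β σ M : ℝ) (g : ℝ → ℝ)
    (ha : 0 < a) (hβ : 0 < β) (hσ : 0 < σ)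
    (hg_nonneg : ∀ x, 0 ≤ g x)
    (hg_pdf : ∫ x in Set.Ioi (0 : ℝ), g x = 1)
    (hM : ∫ x in Set.Ioi (0 : ℝ), x * g x = M)
    (hMean_int : IntegrableOn (fun x : ℝ => x * g x) (Set.Ioi 0))
    (h_int : ∀ x ∈ Set.Ioi (0 : ℝ),
      IntegrableOn (fun xt : ℝ => GP xt x a β * lognormalPdf xt (Real.log x) σ)
        (Set.Ioi 0))
    (h_int' : IntegrableOn
      (fun x : ℝ =>
        (∫ xt in Set.Ioi (0 : ℝ),
          GP xt x a β * lognormalPdf xt (Real.log x) σ) * g x)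
      (Set.Ioi 0)) :
    ∫ x in Set.Ioi (0 : ℝ),
        (∫ xt in Set.Ioi (0 : ℝ),
          GP xt x a β * lognormalPdf xt (Real.log x) σ) * g x =
      a * β / (a + 1) * M *
        ((∫ y in Set.Ioc (0 : ℝ) 1,
            (1 / (σ * Real.sqrt (2 * Real.pi))) *
              Real.exp (-(Real.log y) ^ 2 / (2 * σ ^ 2))) +
          ∫ y in Set.Ioi (1 : ℝ),
            y ^ (-a - 1) * ((1 / (σ * Real.sqrt (2 * Real.pi))) *
              Real.exp (-(Real.log y) ^ 2 / (2 * σ ^ 2)))) := by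
  set c := a * β / (a + 1) with hc
  have hsqrt : (0:ℝ) < Real.sqrt (2 * Real.pi) := Real.sqrt_pos.mpr (by positivity)
  have ha1 : (1:ℝ) + a ≠ 0 := by positivity
  have ha1' : a + 1 ≠ 0 := by positivity
  have hs : (0:ℝ) < σ * Real.sqrt (2 * Real.pi) := by positivity
  set φ : ℝ → ℝ := fun y =>
    (1 / (σ * Real.sqrt (2 * Real.pi))) *
      Real.exp (-(Real.log y) ^ 2 / (2 * σ ^ 2)) with hφ
  set I : ℝ := (∫ y in Set.Ioc (0:ℝ) 1, φ y) + ∫ y in Set.Ioi (1:ℝ), y ^ (-a - 1) * φ y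
    with hI
  -- inner integral computation
  have key : ∀ x ∈ Set.Ioi (0:ℝ),
      (∫ xt in Set.Ioi (0:ℝ), GP xt x a β * lognormalPdf xt (Real.log x) σ)
        = c * x * I := by
    intro x hx
    have hx0 : (0:ℝ) < x := hx
    set F : ℝ → ℝ := fun xt => GP xt x a β * lognormalPdf xt (Real.log x) σ with hF
    set h : ℝ → ℝ := fun y => if y ≤ 1 then c * φ y else c * (y ^ (-a - 1) * φ y) with hh
    have pointwise : ∀ y ∈ Set.Ioi (0:ℝ), F (x * y) = h y := by
      intro y hy
      have hy0 : (0:ℝ) < y := hy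
      have hxy : (0:ℝ) < x * y := by positivity
      have hlog : Real.log (x * y) - Real.log x = Real.log y := by
        rw [Real.log_mul hx0.ne' hy0.ne']; ring
      simp only [hF, hh, GP, lognormalPdf, hlog]
      by_cases hy1 : y ≤ 1
      · have hle : x * y ≤ x := by nlinarith
        rw [if_pos hle, if_pos hy1]
        simp only [hφ]
        field_simp [ha1]
        rw [hc]
        field_simp [ha1']
      · have hlt : ¬ (x * y ≤ x) := by
          push_neg
          nlinarith [lt_of_not_ge hy1]
        rw [if_neg hlt, if_neg hy1]
        have hdiv : x / (x * y) = y⁻¹ := by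
          field_simp
        have hrpow : (y⁻¹ : ℝ) ^ a = y ^ (-a) := by
          rw [Real.inv_rpow hy0.le, ← Real.rpow_neg hy0.le]
        have hsplit : y ^ (-a - 1) = y ^ (-a) * y⁻¹ := by
          rw [← Real.rpow_neg_one y, ← Real.rpow_add hy0]
          ring_nf
        rw [hdiv, hrpow, hsplit]
        simp only [hφ]
        have hya : (0:ℝ) < y ^ (-a) := Real.rpow_pos_of_pos hy0 _
        field_simp [ha1]
        rw [hc]
        field_simp [ha1']
    -- substitution
    have hsub : (∫ xt in Set.Ioi (0:ℝ), F xt) = x * ∫ y in Set.Ioi (0:ℝ), F (x * y) := by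
      have := MeasureTheory.integral_comp_mul_left_Ioi F 0 hx0
      rw [mul_zero] at this
      rw [this, smul_eq_mul, ← mul_assoc, mul_inv_cancel₀ hx0.ne', one_mul]
    have hcong : (∫ y in Set.Ioi (0:ℝ), F (x * y)) = ∫ y in Set.Ioi (0:ℝ), h y :=
      setIntegral_congr_fun measurableSet_Ioi pointwise
    -- integrability of h
    have hFi : IntegrableOn F (Set.Ioi 0) := h_int x hx
    have hFci : IntegrableOn (fun y => F (x * y)) (Set.Ioi 0) := by
      have := (MeasureTheory.integrableOn_Ioi_comp_mul_left_iff F 0 hx0).mpr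
      rw [mul_zero] at this
      exact this hFi
    have hhi : IntegrableOn h (Set.Ioi 0) :=
      hFci.congr_fun pointwise measurableSet_Ioi
    -- split the integral
    have hunion : Set.Ioc (0:ℝ) 1 ∪ Set.Ioi 1 = Set.Ioi 0 :=
      Set.Ioc_union_Ioi_eq_Ioi zero_le_one
    have hsplit : (∫ y in Set.Ioi (0:ℝ), h y)
        = (∫ y in Set.Ioc (0:ℝ) 1, h y) + ∫ y in Set.Ioi (1:ℝ), h y := by
      rw [← hunion]
      exact setIntegral_union (Set.Ioc_disjoint_Ioi le_rfl) measurableSet_Ioi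
        (hhi.mono_set (by rw [← hunion]; exact Set.subset_union_left))
        (hhi.mono_set (by rw [← hunion]; exact Set.subset_union_right))
    have h1 : (∫ y in Set.Ioc (0:ℝ) 1, h y) = c * ∫ y in Set.Ioc (0:ℝ) 1, φ y := by
      rw [← integral_const_mul]
      exact setIntegral_congr_fun measurableSet_Ioc (fun y hy => by
        simp only [hh, if_pos hy.2])
    have h2 : (∫ y in Set.Ioi (1:ℝ), h y)
        = c * ∫ y in Set.Ioi (1:ℝ), y ^ (-a - 1) * φ y := by
      rw [← integral_const_mul]
      exact setIntegral_congr_fun measurableSet_Ioi (fun y hy => by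
        simp only [hh, if_neg (not_le.mpr (Set.mem_Ioi.mp hy))])
    rw [hsub, hcong, hsplit, h1, h2, hI]
    ring
  -- outer integral
  have houter : (∫ x in Set.Ioi (0:ℝ),
      (∫ xt in Set.Ioi (0:ℝ), GP xt x a β * lognormalPdf xt (Real.log x) σ) * g x)
      = ∫ x in Set.Ioi (0:ℝ), c * I * (x * g x) :=
    setIntegral_congr_fun measurableSet_Ioi (fun x hx => by rw [key x hx]; ring)
  rw [houter, integral_const_mul, hM]
  simp only [hφ, hI]
  ring
end
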